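/- Let f : ℝ^d → ℝ∪{+∞} be lower semicontinuous, quasiconvex, with min f = 0 attained, let ε > 0 and let f_ε(x) := inf_{w∈𝔹} f(x−εw). Then for every x ∈ dom f_ε, the sublevel set [f ≤ f_ε(x)] is nonempty, closed and convex, the point z := proj(x; [f ≤ f_ε(x)]) (the unique nearest point of x in [f ≤ f_ε(x)]) satisfies f(z) = f_ε(x), and the metric slopes satisfy |∇f_ε|(x) ≥ |∇f|(z). -/

import Mathlib

open Filter Set Metric MeasureTheory
open scoped Topology ENNReal NNReal RealInnerProductSpace Pointwise

noncomputable section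

abbrev Euc (d : ℕ) := EuclideanSpace ℝ (Fin d)

/-- The metric slope `|∇f|(x)`, with value `+∞` outside of the domain of `f`. -/
def mslope {d : ℕ} (f : Euc d → EReal) (x : Euc d) : ℝ≥0∞ :=
  if f x = ⊤ then ⊤
  else Filter.limsup (fun y => ENNReal.ofReal ((max (f x - f y) 0).toReal / dist x y)) (𝓝[≠] x)

/-- The limiting slope `|∇f|⁻(x) = liminf_{y→x, f(y)→f(x)} |∇f|(y)`. -/
def limSlope {d : ℕ} (f : Euc d → EReal) (x : Euc d) : ℝ≥0∞ :=
  Filter.liminf (fun y => mslope f y) (𝓝 x ⊓ Filter.comap f (𝓝 (f x)))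

/-- Quasiconvexity for extended-real-valued functions. -/
def QuasiConvexE {d : ℕ} (f : Euc d → EReal) : Prop :=
  ∀ x y : Euc d, ∀ t : ℝ, 0 ≤ t → t ≤ 1 →
    f (t • x + (1 - t) • y) ≤ max (f x) (f y)

/-- Coercivity: every sublevel set below `sup f` is compact. -/
def CoerciveE {d : ℕ} (f : Euc d → EReal) : Prop :=
  ∀ α : ℝ, (α : EReal) < ⨆ x, f x → IsCompact {x : Euc d | f x ≤ (α : EReal)}

/-- Hypothesis (H1). -/
def HypH1 {d : ℕ} (f : Euc d → EReal) : Prop :=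
  CoerciveE f ∧
    ∀ α : ℝ, (⨅ x, f x) < (α : EReal) →
      (interior {x : Euc d | f x ≤ (α : EReal)}).Nonempty

/-- Hypothesis (H2): the slope is bounded away from zero around every non-minimizing
point of the domain. -/
def HypH2 {d : ℕ} (f : Euc d → EReal) : Prop :=
  ∀ x : Euc d, f x ≠ ⊤ → (∃ y, f y < f x) →
    ∃ δ : ℝ, 0 < δ ∧ ∃ ℓ : ℝ≥0∞, 0 < ℓ ∧
      ∀ y ∈ Metric.ball x δ, f y ≠ ⊤ → ℓ < mslope f y

/-- `r`-prox-regularity of a set: points at distance `< r` have a unique nearest point. -/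
def ProxRegularWith {d : ℕ} (r : ℝ) (S : Set (Euc d)) : Prop :=
  ∀ u : Euc d, 0 < Metric.infDist u S → Metric.infDist u S < r →
    ∃! y : Euc d, y ∈ S ∧ dist u y = Metric.infDist u S

/-- Hypothesis (H3). -/
def HypH3 {d : ℕ} (f : Euc d → EReal) : Prop :=
  ∀ α : ℝ, (⨅ x, f x) < (α : EReal) → (α : EReal) < (⨆ x, f x) →
    ∃ η : ℝ, 0 < η ∧ ∃ r : ℝ, 0 < r ∧
      ∀ β : ℝ, |β - α| < η →
        ProxRegularWith r (interior {x : Euc d | f x ≤ (β : EReal)})ᶜ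

/-- Normal cone to a convex set. -/
def normalConeCvx {d : ℕ} (S : Set (Euc d)) (x : Euc d) : Set (Euc d) :=
  {v : Euc d | ∀ y ∈ S, (inner ℝ v (y - x) : ℝ) ≤ 0}

/-- Proximal normal cone to a closed set. -/
def proxNormalCone {d : ℕ} (S : Set (Euc d)) (x : Euc d) : Set (Euc d) :=
  {v : Euc d | ∃ σ : ℝ, 0 < σ ∧ ∀ y ∈ S, (inner ℝ v (y - x) : ℝ) ≤ σ * ‖y - x‖ ^ 2}

open Classical in
/-- The extended-real-valued indicator function of a set. -/
def erealInd {d : ℕ} (C : Set (Euc d)) : Euc d → EReal :=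
  fun x => if x ∈ C then (0 : EReal) else ⊤

/-- The max-convolution `(f ⋄ g)(x) = inf_w max (f (x - w)) (g w)`. -/
def maxConv {d : ℕ} (f g : Euc d → EReal) (x : Euc d) : EReal :=
  ⨅ w : Euc d, max (f (x - w)) (g w)

/-- The regularization `f_ε = f ⋄ I_{ε𝔹}`, i.e. `f_ε x = inf_{w ∈ 𝔹} f (x - ε w)`. -/
def maxConvReg {d : ℕ} (f : Euc d → EReal) (ε : ℝ) (x : Euc d) : EReal :=
  ⨅ w ∈ Metric.closedBall (0 : Euc d) 1, f (x - ε • w)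

/-- The real-valued regularization of a real-valued function. -/
def regR {d : ℕ} (f : Euc d → ℝ) (ε : ℝ) (x : Euc d) : ℝ :=
  sInf ((fun w => f (x - ε • w)) '' Metric.closedBall (0 : Euc d) 1)

/-- `f` admits a steepest descent curve emanating from `x₀`: a 1-Lipschitz curve
`c : [0,T] → ℝ^d` with `c 0 = x₀` such that `(f ∘ c)'(t) = -|∇f|(c t)` for a.e. `t`. -/
def HasSteepestDescentCurveFrom {d : ℕ} (f : Euc d → EReal) (x₀ : Euc d) : Prop :=
  ∃ T : ℝ, 0 < T ∧ ∃ c : ℝ → Euc d,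
    LipschitzOnWith 1 c (Set.Icc 0 T) ∧ c 0 = x₀ ∧
    (∀ t ∈ Set.Icc (0 : ℝ) T, f (c t) ≠ ⊤) ∧
    ∀ᵐ t ∂(volume.restrict (Set.Icc (0 : ℝ) T)),
      mslope f (c t) ≠ ⊤ ∧
      HasDerivAt (fun s => (f (c s)).toReal) (-(mslope f (c t)).toReal) t

/-!
The sublevel set `S = [f ≤ f_ε x]` is closed by lower semicontinuity and convex by
quasiconvexity. Since the infimum defining `f_ε x` is attained, `S` meets the ball `B(x, ε)`, so
the projection `z` of `x` onto `S` satisfies `‖x - z‖ ≤ ε`. Hence the translate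
`y ↦ y + (x - z)` moves every point by at most `ε`, which gives `f_ε (y + (x - z)) ≤ f y` for all
`y`, with equality at `y = z`. Comparing difference quotients along this translation yields
`|∇f|(z) ≤ |∇f_ε|(x)`.
-/

theorem Convex.eq_of_dist_eq_infDist {E : Type*} [NormedAddCommGroup E] [NormedSpace ℝ E]
    [StrictConvexSpace ℝ E] {S : Set E} (hS : Convex ℝ S) {x z z' : E} (hz : z ∈ S)
    (hz' : z' ∈ S) (hxz : dist x z = infDist x S) (hxz' : dist x z' = infDist x S) :
    z' = z := by
  by_contra hne
  have hnorm : ‖x - z‖ = ‖x - z'‖ := by rw [← dist_eq_norm, ← dist_eq_norm, hxz, hxz']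
  have hlt : ‖(1 / 2 : ℝ) • ((x - z) + (x - z'))‖ < ‖x - z‖ :=
    (norm_midpoint_lt_iff hnorm).2 fun h => hne (sub_right_injective h).symm
  have hmid : x - (1 / 2 : ℝ) • ((x - z) + (x - z')) = (1 / 2 : ℝ) • z + (1 / 2 : ℝ) • z' := by
    module
  have hle := infDist_le_dist_of_mem (x := x)
    (hS hz hz' (by norm_num) (by norm_num) (add_halves 1))
  rw [dist_eq_norm, ← hmid, sub_sub_cancel, ← hxz, dist_eq_norm] at hle
  exact hle.not_gt hlt

section

variable {d : ℕ}

theorem QuasiConvexE.convex_setOf_le {f : Euc d → EReal} (hf : QuasiConvexE f) (a : EReal) :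
    Convex ℝ {y | f y ≤ a} := by
  intro u hu v hv s t hs ht hst
  obtain rfl : t = 1 - s := by linarith
  exact (hf u v s hs (by linarith)).trans (max_le hu hv)

theorem exists_mem_closedBall_eq_maxConvReg {f : Euc d → EReal} (hf : LowerSemicontinuous f)
    (ε : ℝ) (x : Euc d) : ∃ w ∈ closedBall (0 : Euc d) 1, f (x - ε • w) = maxConvReg f ε x := by
  obtain ⟨w, hw, hmin⟩ := ((hf.comp (by fun_prop : Continuous fun w : Euc d => x - ε • w))
    |>.lowerSemicontinuousOn _).exists_isMinOn (nonempty_closedBall.2 zero_le_one)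
    (isCompact_closedBall 0 1)
  exact ⟨w, hw, le_antisymm (le_iInf₂ fun v hv => isMinOn_iff.1 hmin v hv) (iInf₂_le w hw)⟩

theorem maxConvReg_ne_bot {f : Euc d → EReal} (hf : LowerSemicontinuous f) (hbot : ∀ y, f y ≠ ⊥)
    (ε : ℝ) (x : Euc d) : maxConvReg f ε x ≠ ⊥ := by
  obtain ⟨w, -, hw⟩ := exists_mem_closedBall_eq_maxConvReg hf ε x
  exact hw ▸ hbot _

theorem maxConvReg_le_of_dist_le (f : Euc d → EReal) {ε : ℝ} (hε : 0 < ε) {x y : Euc d}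
    (h : dist x y ≤ ε) : maxConvReg f ε x ≤ f y := by
  have hw : ε⁻¹ • (x - y) ∈ closedBall (0 : Euc d) 1 := by
    rw [mem_closedBall_zero_iff, norm_smul, Real.norm_of_nonneg (inv_nonneg.2 hε.le),
      ← dist_eq_norm]
    exact inv_mul_le_one_of_le₀ h hε.le
  calc maxConvReg f ε x ≤ f (x - ε • ε⁻¹ • (x - y)) := iInf₂_le _ hw
    _ = f y := by rw [smul_inv_smul₀ hε.ne', sub_sub_cancel]

theorem mslope_le_of_le_comp_add {f g : Euc d → EReal} {v z : Euc d} (hg : ∀ y, g y ≠ ⊥)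
    (hle : ∀ y, g (y + v) ≤ f y) (heq : g (z + v) = f z) : mslope f z ≤ mslope g (z + v) := by
  by_cases htop : f z = ⊤
  · simp [mslope, htop, heq]
  rw [mslope, mslope, if_neg htop, heq, if_neg htop,
    ← map_add_right_nhdsNE, ← limsup_comp]
  refine limsup_le_limsup (Eventually.of_forall fun y => ?_) (by isBoundedDefault)
    (by isBoundedDefault)
  have hfin : f z - g (y + v) ≠ ⊤ := by
    have hb := hg (y + v)
    generalize f z = a, g (y + v) = b at htop hb ⊢
    induction a using EReal.rec <;> induction b using EReal.rec <;> simp_all [← EReal.coe_sub]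
  have hnum : (max (f z - f y) 0).toReal ≤ (max (f z - g (y + v)) 0).toReal :=
    EReal.toReal_le_toReal (max_le_max (EReal.sub_le_sub le_rfl (hle y)) le_rfl)
      (ne_bot_of_le_ne_bot EReal.zero_ne_bot (le_max_right _ _))
      (max_ne_top hfin EReal.zero_ne_top)
  simp only [Function.comp_apply, dist_add_right]
  gcongr

end

theorem statement12_general {d : ℕ} (f : Euc d → EReal)
    (hne_bot : ∀ x, f x ≠ ⊥)
    (hlsc : LowerSemicontinuous f)
    (hqc : QuasiConvexE f)
    (ε : ℝ) (hε : 0 < ε)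
    (x : Euc d) :
    ({y : Euc d | f y ≤ maxConvReg f ε x}).Nonempty ∧
    IsClosed {y : Euc d | f y ≤ maxConvReg f ε x} ∧
    Convex ℝ {y : Euc d | f y ≤ maxConvReg f ε x} ∧
    ∃ z : Euc d,
      (z ∈ {y : Euc d | f y ≤ maxConvReg f ε x} ∧
        dist x z = Metric.infDist x {y : Euc d | f y ≤ maxConvReg f ε x}) ∧
      (∀ z' : Euc d,
        z' ∈ {y : Euc d | f y ≤ maxConvReg f ε x} ∧
          dist x z' = Metric.infDist x {y : Euc d | f y ≤ maxConvReg f ε x} → z' = z) ∧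
      f z = maxConvReg f ε x ∧
      mslope f z ≤ mslope (maxConvReg f ε) x := by
  set S := {y : Euc d | f y ≤ maxConvReg f ε x}
  obtain ⟨w, hw, hfw⟩ := exists_mem_closedBall_eq_maxConvReg hlsc ε x
  have hwS : x - ε • w ∈ S := hfw.le
  have hSclosed : IsClosed S := hlsc.isClosed_preimage _
  have hSconv : Convex ℝ S := hqc.convex_setOf_le _
  obtain ⟨z, hzS, hxz⟩ := hSclosed.exists_infDist_eq_dist ⟨_, hwS⟩ x
  have hxz_le : dist x z ≤ ε := by
    rw [← hxz]
    refine (infDist_le_dist_of_mem hwS).trans ?_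
    rw [dist_self_sub_right, norm_smul, Real.norm_of_nonneg hε.le]
    exact mul_le_of_le_one_right hε.le (mem_closedBall_zero_iff.1 hw)
  have hfz : f z = maxConvReg f ε x := le_antisymm hzS (maxConvReg_le_of_dist_le f hε hxz_le)
  refine ⟨⟨_, hwS⟩, hSclosed, hSconv, z, ⟨hzS, hxz.symm⟩,
    fun z' hz' => hSconv.eq_of_dist_eq_infDist hzS hz'.1 hxz.symm hz'.2, hfz, ?_⟩
  have hshift : ∀ y, maxConvReg f ε (y + (x - z)) ≤ f y := fun y =>
    maxConvReg_le_of_dist_le f hε (by rwa [dist_self_add_left, ← dist_eq_norm])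
  have hslope := mslope_le_of_le_comp_add (maxConvReg_ne_bot hlsc hne_bot ε) hshift
    (by rw [add_sub_cancel, hfz])
  rwa [add_sub_cancel] at hslope

theorem statement12 {d : ℕ} (f : Euc d → EReal)
    (hne_bot : ∀ x, f x ≠ ⊥)
    (hlsc : LowerSemicontinuous f)
    (hqc : QuasiConvexE f)
    (hmin : ∃ x₀ : Euc d, f x₀ = 0 ∧ ∀ x, (0 : EReal) ≤ f x)
    (ε : ℝ) (hε : 0 < ε)
    (x : Euc d) (hx : maxConvReg f ε x ≠ ⊤) :
    ({y : Euc d | f y ≤ maxConvReg f ε x}).Nonempty ∧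
    IsClosed {y : Euc d | f y ≤ maxConvReg f ε x} ∧
    Convex ℝ {y : Euc d | f y ≤ maxConvReg f ε x} ∧
    ∃ z : Euc d,
      (z ∈ {y : Euc d | f y ≤ maxConvReg f ε x} ∧
        dist x z = Metric.infDist x {y : Euc d | f y ≤ maxConvReg f ε x}) ∧
      (∀ z' : Euc d,
        z' ∈ {y : Euc d | f y ≤ maxConvReg f ε x} ∧
          dist x z' = Metric.infDist x {y : Euc d | f y ≤ maxConvReg f ε x} → z' = z) ∧
      f z = maxConvReg f ε x ∧
      mslope f z ≤ mslope (maxConvReg f ε) x :=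
  statement12_general f hne_bot hlsc hqc ε hε x

end
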